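/- Classical trust region bound: if the reward takes values in [0,1], then |Error| ≤ 2·T·(T−1)·(D_TV^{tok,max})², and consequently |Error| ≤ T·(T−1)·D_KL^{tok,max}, where D_TV^{tok,max} = max over steps t and contexts c of D_TV(π_θ(·|c), π_roll(·|c)) with D_TV(p,q) = ½ Σ_v |p(v) − q(v)|, and D_KL^{tok,max} = max over t and c of D_KL(π_roll(·|c) ‖ π_θ(·|c)) with D_KL(p‖q) = Σ_v p(v) log(p(v)/q(v)). -/

import Mathlib

open Finset

section Setup

variable {X V : Type*}

/-- A policy assigns to each context `(x, y_{<t})` (a prompt together with a token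
prefix of length `t`) a strictly positive probability distribution on the next token. -/
structure Policy (X V : Type*) [Fintype V] where
  prob : ∀ t : ℕ, X × (Fin t → V) → V → ℝ
  pos : ∀ t c v, 0 < prob t c v
  sum_one : ∀ t c, ∑ v, prob t c v = 1

variable [Fintype X] [Fintype V]

/-- Trajectory probability `P^π(y | x) = ∏_t π(y_t | x, y_{<t})`. -/
noncomputable def traj (π : Policy X V) (T : ℕ) (x : X) (y : Fin T → V) : ℝ :=
  ∏ t : Fin T, π.prob t.1 (x, fun s : Fin t.1 => y (Fin.castLE t.isLt.le s)) (y t)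

/-- Context visitation mass at prefix length `k`: this is the paper's `d_{k+1}^π`,
a distribution on pairs (prompt, prefix of `k` tokens). -/
noncomputable def visit (π : Policy X V) (P : X → ℝ) (k : ℕ) (c : X × (Fin k → V)) : ℝ :=
  P c.1 * ∏ s : Fin k, π.prob s.1 (c.1, fun u : Fin s.1 => c.2 (Fin.castLE s.isLt.le u)) (c.2 s)

/-- Total variation distance `½ ∑ |p - q|`. -/
noncomputable def tvDist {α : Type*} [Fintype α] (p q : α → ℝ) : ℝ :=
  (∑ a, |p a - q a|) / 2

/-- KL divergence `∑ p log (p/q)`. -/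
noncomputable def klDiv {α : Type*} [Fintype α] (p q : α → ℝ) : ℝ :=
  ∑ a, p a * Real.log (p a / q a)

/-- The objective `J(π) = E_{x∼P} E_{y∼P^π(·|x)}[R(x,y)]`. -/
noncomputable def Jval (P : X → ℝ) (T : ℕ) (R : X → (Fin T → V) → ℝ) (π : Policy X V) : ℝ :=
  ∑ x, P x * ∑ y : Fin T → V, traj π T x y * R x y

/-- `Q^π(c, v)`: conditional expectation of the reward under continuation by `π`,
given context `c` (of length `k`) and next token `v`. -/
noncomputable def Qval (T : ℕ) (R : X → (Fin T → V) → ℝ) (π : Policy X V)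
    (k : ℕ) (hk : k < T) (c : X × (Fin k → V)) (v : V) : ℝ := by
  classical
  exact ∑ y : Fin T → V,
    if (∀ s : Fin k, y (Fin.castLE hk.le s) = c.2 s) ∧ y ⟨k, hk⟩ = v then
      (∏ s : Fin T, if k < s.1 then
          π.prob s.1 (c.1, fun u : Fin s.1 => y (Fin.castLE s.isLt.le u)) (y s)
        else 1) * R c.1 y
    else 0

/-- `V^π(c) = E_{v ∼ π(·|c)}[Q^π(c, v)]`. -/
noncomputable def Vval (T : ℕ) (R : X → (Fin T → V) → ℝ) (π : Policy X V)
    (k : ℕ) (hk : k < T) (c : X × (Fin k → V)) : ℝ :=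
  ∑ v, π.prob k c v * Qval T R π k hk c v

/-- Per-step advantage `A_t(c, v) = Q^{π_roll}(c,v) - V^{π_roll}(c)`. -/
noncomputable def Aval (T : ℕ) (R : X → (Fin T → V) → ℝ) (πroll : Policy X V)
    (k : ℕ) (hk : k < T) (c : X × (Fin k → V)) (v : V) : ℝ :=
  Qval T R πroll k hk c v - Vval T R πroll k hk c

/-- `g_t(c) = E_{v ∼ π_θ(·|c)}[A_t(c, v)]`. -/
noncomputable def gval (T : ℕ) (R : X → (Fin T → V) → ℝ) (πroll πθ : Policy X V)
    (k : ℕ) (hk : k < T) (c : X × (Fin k → V)) : ℝ :=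
  ∑ v, πθ.prob k c v * Aval T R πroll k hk c v

/-- Surrogate objective `L = ∑_{t=1}^T E_{c ∼ d_t^{π_roll}}[g_t(c)]`. -/
noncomputable def surrogate (P : X → ℝ) (T : ℕ) (R : X → (Fin T → V) → ℝ)
    (πroll πθ : Policy X V) : ℝ :=
  ∑ k : Fin T, ∑ c : X × (Fin k.1 → V), visit πroll P k.1 c * gval T R πroll πθ k.1 k.isLt c

/-- Approximation error `Error = J(π_θ) - J(π_roll) - L`. -/
noncomputable def errVal (P : X → ℝ) (T : ℕ) (R : X → (Fin T → V) → ℝ)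
    (πroll πθ : Policy X V) : ℝ :=
  Jval P T R πθ - Jval P T R πroll - surrogate P T R πroll πθ

/-- Sequence-level KL divergence `D_KL^seq = E_{x∼P}[D_KL(P^{π_roll}(·|x) ‖ P^{π_θ}(·|x))]`. -/
noncomputable def seqKL (P : X → ℝ) (T : ℕ) (πroll πθ : Policy X V) : ℝ :=
  ∑ x, P x * klDiv (fun y : Fin T → V => traj πroll T x y) (fun y => traj πθ T x y)

end Setup


section AuxProof

private lemma hasDerivAt_F {x : ℝ} (hx : 0 < x) :
    HasDerivAt (fun y : ℝ => Real.log y + 4 / (y + 1)) (1 / x - 4 / (x + 1) ^ 2) x := by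
  have h1 : HasDerivAt Real.log x⁻¹ x := Real.hasDerivAt_log hx.ne'
  have h2 : HasDerivAt (fun y : ℝ => y + 1) 1 x := (hasDerivAt_id x).add_const 1
  have h3 : HasDerivAt (fun y : ℝ => 4 / (y + 1))
      ((0 * (x + 1) - 4 * 1) / (x + 1) ^ 2) x :=
    (hasDerivAt_const x 4).div h2 (by positivity)
  have h4 := h1.fun_add h3
  refine h4.congr_deriv ?_
  rw [one_div]
  ring

private lemma log_lb {x : ℝ} (hx : 1 ≤ x) : 2 * (x - 1) / (x + 1) ≤ Real.log x := by
  have hx0 : (0:ℝ) < x := lt_of_lt_of_le one_pos hx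
  have hmono : MonotoneOn (fun y : ℝ => Real.log y + 4 / (y + 1)) (Set.Icc 1 x) := by
    apply monotoneOn_of_deriv_nonneg (convex_Icc 1 x)
    · intro y hy
      exact ((hasDerivAt_F (lt_of_lt_of_le one_pos hy.1)).differentiableAt).continuousAt.continuousWithinAt
    · intro y hy
      rw [interior_Icc] at hy
      exact ((hasDerivAt_F (lt_trans one_pos hy.1)).differentiableAt).differentiableWithinAt
    · intro y hy
      rw [interior_Icc] at hy
      have hy0 : (0:ℝ) < y := lt_trans one_pos hy.1
      rw [(hasDerivAt_F hy0).deriv]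
      have h4 : 4 / (y + 1) ^ 2 ≤ 1 / y := by
        rw [div_le_div_iff₀ (by positivity) hy0]
        nlinarith [sq_nonneg (y - 1)]
      linarith
  have h := hmono (Set.left_mem_Icc.2 hx) (Set.right_mem_Icc.2 hx) hx
  simp only [Real.log_one] at h
  have heq : 2 * (x - 1) / (x + 1) = 2 - 4 / (x + 1) := by
    field_simp
    ring
  rw [heq]
  norm_num at h
  linarith

private lemma log_ub {x : ℝ} (hx0 : 0 < x) (hx : x ≤ 1) : Real.log x ≤ 2 * (x - 1) / (x + 1) := by
  have h := log_lb (x := 1 / x) (by rw [le_div_iff₀ hx0]; linarith)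
  rw [one_div, Real.log_inv] at h
  have heq : 2 * (x⁻¹ - 1) / (x⁻¹ + 1) = -(2 * (x - 1) / (x + 1)) := by
    rw [div_eq_iff (by positivity)]
    field_simp
    ring
  rw [heq] at h
  linarith

private lemma hasDerivAt_h {x : ℝ} (hx : 0 < x) :
    HasDerivAt (fun y : ℝ => y * Real.log y - y + 1 - 3 * (y - 1) ^ 2 / (2 * (y + 2)))
      (Real.log x - 3 * (x - 1) * (x + 5) / (2 * (x + 2) ^ 2)) x := by
  have h1 : HasDerivAt (fun y : ℝ => y * Real.log y) (1 * Real.log x + x * x⁻¹) x :=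
    (hasDerivAt_id x).mul (Real.hasDerivAt_log hx.ne')
  have h2 : HasDerivAt (fun y : ℝ => 3 * (y - 1) ^ 2)
      (3 * ((2 : ℕ) * (x - 1) ^ 1 * 1)) x :=
    (((hasDerivAt_id x).sub_const 1).pow 2).const_mul 3
  have h3 : HasDerivAt (fun y : ℝ => 2 * (y + 2)) (2 * 1) x :=
    ((hasDerivAt_id x).add_const 2).const_mul 2
  have h4 : HasDerivAt (fun y : ℝ => 3 * (y - 1) ^ 2 / (2 * (y + 2)))
      ((3 * ((2 : ℕ) * (x - 1) ^ 1 * 1) * (2 * (x + 2)) - 3 * (x - 1) ^ 2 * (2 * 1)) / (2 * (x + 2)) ^ 2) x :=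
    h2.div h3 (by positivity)
  have h5 := (((h1.fun_sub (hasDerivAt_id x)).add_const 1).fun_sub h4)
  refine h5.congr_deriv ?_
  have hx' : x ≠ 0 := hx.ne'
  field_simp
  ring

private lemma key_ineq {x : ℝ} (hx : 0 < x) :
    3 * (x - 1) ^ 2 / (2 * (x + 2)) ≤ x * Real.log x - x + 1 := by
  set h : ℝ → ℝ := fun y : ℝ => y * Real.log y - y + 1 - 3 * (y - 1) ^ 2 / (2 * (y + 2)) with hdef
  have h1 : h 1 = 0 := by simp [hdef]
  have main : 0 ≤ h x := by
    rcases le_or_gt 1 x with h1x | hx1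
    · have hmono : MonotoneOn h (Set.Icc 1 x) := by
        apply monotoneOn_of_deriv_nonneg (convex_Icc 1 x)
        · intro y hy
          exact ((hasDerivAt_h (lt_of_lt_of_le one_pos hy.1)).differentiableAt).continuousAt.continuousWithinAt
        · intro y hy
          rw [interior_Icc] at hy
          exact ((hasDerivAt_h (lt_trans one_pos hy.1)).differentiableAt).differentiableWithinAt
        · intro y hy
          rw [interior_Icc] at hy
          have hy0 : (0:ℝ) < y := lt_trans one_pos hy.1
          rw [(hasDerivAt_h hy0).deriv]
          have hlb := log_lb hy.1.le
          have hcmp : 3 * (y - 1) * (y + 5) / (2 * (y + 2) ^ 2) ≤ 2 * (y - 1) / (y + 1) := by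
            rw [div_le_div_iff₀ (by positivity) (by positivity)]
            nlinarith [sq_nonneg (y - 1), hy.1.le]
          linarith
      have := hmono (Set.left_mem_Icc.2 h1x) (Set.right_mem_Icc.2 h1x) h1x
      rw [h1] at this; exact this
    · have hanti : AntitoneOn h (Set.Icc x 1) := by
        apply antitoneOn_of_deriv_nonpos (convex_Icc x 1)
        · intro y hy
          exact ((hasDerivAt_h (lt_of_lt_of_le hx hy.1)).differentiableAt).continuousAt.continuousWithinAt
        · intro y hy
          rw [interior_Icc] at hy
          exact ((hasDerivAt_h (lt_trans hx hy.1)).differentiableAt).differentiableWithinAt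
        · intro y hy
          rw [interior_Icc] at hy
          have hy0 : (0:ℝ) < y := lt_trans hx hy.1
          have hy1 : y ≤ 1 := hy.2.le
          rw [(hasDerivAt_h hy0).deriv]
          have hub := log_ub hy0 hy1
          have hcmp : 2 * (y - 1) / (y + 1) ≤ 3 * (y - 1) * (y + 5) / (2 * (y + 2) ^ 2) := by
            rw [div_le_div_iff₀ (by positivity) (by positivity)]
            nlinarith [sq_nonneg (y - 1), mul_nonneg (sq_nonneg (y - 1)) (sub_nonneg.2 hy1)]
          linarith
      have := hanti (Set.left_mem_Icc.2 hx1.le) (Set.right_mem_Icc.2 hx1.le) hx1.le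
      rw [h1] at this; exact this
  have : 0 ≤ x * Real.log x - x + 1 - 3 * (x - 1) ^ 2 / (2 * (x + 2)) := main
  linarith

private lemma pinsker_pointwise {p q : ℝ} (hp : 0 < p) (hq : 0 < q) :
    3 * (p - q) ^ 2 / (2 * (p + 2 * q)) ≤ p * Real.log (p / q) - p + q := by
  have h := key_ineq (x := p / q) (by positivity)
  have h2 := mul_le_mul_of_nonneg_left h hq.le
  have e1 : q * (p / q * Real.log (p / q) - p / q + 1) = p * Real.log (p / q) - p + q := by
    field_simp
  have e2 : q * (3 * (p / q - 1) ^ 2 / (2 * (p / q + 2))) = 3 * (p - q) ^ 2 / (2 * (p + 2 * q)) := by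
    rw [eq_div_iff (by positivity)]
    field_simp
  rw [e1, e2] at h2
  exact h2

private lemma pinsker_fin {α : Type*} [Fintype α] (p q : α → ℝ)
    (hp : ∀ a, 0 < p a) (hq : ∀ a, 0 < q a)
    (hp1 : ∑ a, p a = 1) (hq1 : ∑ a, q a = 1) :
    2 * tvDist q p ^ 2 ≤ klDiv p q := by
  have hkl : klDiv p q = ∑ a, (p a * Real.log (p a / q a) - p a + q a) := by
    unfold klDiv
    rw [Finset.sum_add_distrib, Finset.sum_sub_distrib, hp1, hq1]
    ring
  have h1 : ∑ a, 3 * (p a - q a) ^ 2 / (2 * (p a + 2 * q a)) ≤ klDiv p q := by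
    rw [hkl]
    exact Finset.sum_le_sum fun a _ => pinsker_pointwise (hp a) (hq a)
  have h2 : (∑ a, |p a - q a|) ^ 2 / (∑ a, (p a + 2 * q a)) ≤
      ∑ a, |p a - q a| ^ 2 / (p a + 2 * q a) :=
    Finset.sq_sum_div_le_sum_sq_div _ _ (fun a _ => by have := hp a; have := hq a; positivity)
  have h3 : ∑ a, (p a + 2 * q a) = 3 := by
    rw [Finset.sum_add_distrib, hp1, ← Finset.mul_sum, hq1]; norm_num
  rw [h3] at h2
  have h4 : ∑ a, |p a - q a| ^ 2 / (p a + 2 * q a) ≤ (2/3) * klDiv p q := by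
    have : ∑ a, |p a - q a| ^ 2 / (p a + 2 * q a)
        = (2/3) * ∑ a, 3 * (p a - q a) ^ 2 / (2 * (p a + 2 * q a)) := by
      rw [Finset.mul_sum]
      refine Finset.sum_congr rfl fun a _ => ?_
      rw [sq_abs]
      have := hp a; have := hq a
      field_simp
    rw [this]
    have h23 : (0:ℝ) ≤ 2/3 := by norm_num
    exact mul_le_mul_of_nonneg_left h1 h23
  have h5 : (∑ a, |p a - q a|) ^ 2 / 3 ≤ (2/3) * klDiv p q := le_trans h2 h4
  have htv : tvDist q p = (∑ a, |p a - q a|) / 2 := by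
    unfold tvDist
    congr 1
    exact Finset.sum_congr rfl fun a _ => abs_sub_comm _ _
  rw [htv]
  nlinarith [h5]



open Finset
variable {X V : Type*} [Fintype X] [Fintype V]

open Finset
variable {X V : Type*} [Fintype X] [Fintype V]

lemma snoc_elt_lt {k : ℕ} (p : Fin k → V) (v : V) (i : Fin (k + 1)) (h : i.1 < k) :
    (Fin.snoc p v : Fin (k+1) → V) i = p ⟨i.1, h⟩ := by
  have hi : i = Fin.castSucc ⟨i.1, h⟩ := Fin.ext rfl
  conv_lhs => rw [hi]
  rw [Fin.snoc_castSucc]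

lemma snoc_elt_eq {k : ℕ} (p : Fin k → V) (v : V) (i : Fin (k + 1)) (h : i.1 = k) :
    (Fin.snoc p v : Fin (k+1) → V) i = v := by
  have hi : i = Fin.last k := Fin.ext h
  conv_lhs => rw [hi]
  rw [Fin.snoc_last]

open Classical in
/-- Expected reward when the first `k` tokens are fixed by `c` and the rest follow `π`. -/
noncomputable def Vexp (T : ℕ) (R : X → (Fin T → V) → ℝ) (π : Policy X V) (k : ℕ)
    (c : X × (Fin k → V)) : ℝ :=
  ∑ y : Fin T → V,
    if (∀ s : Fin T, ∀ h : s.1 < k, y s = c.2 ⟨s.1, h⟩) then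
      (∏ s : Fin T, if k ≤ s.1 then
        π.prob s.1 (c.1, fun u : Fin s.1 => y (Fin.castLE s.isLt.le u)) (y s) else 1) * R c.1 y
    else 0

lemma cond_succ_iff {T k : ℕ} (hk : k < T) (p : Fin k → V) (v : V) (y : Fin T → V) :
    (∀ s : Fin T, ∀ h : s.1 < k + 1, y s = (Fin.snoc p v : Fin (k+1) → V) ⟨s.1, h⟩) ↔
      ((∀ s : Fin T, ∀ h : s.1 < k, y s = p ⟨s.1, h⟩) ∧ y ⟨k, hk⟩ = v) := by
  constructor
  · intro H
    refine ⟨fun s h => ?_, ?_⟩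
    · rw [H s (h.trans (Nat.lt_succ_self k)), snoc_elt_lt _ _ _ h]
    · rw [H ⟨k, hk⟩ (Nat.lt_succ_self k), snoc_elt_eq _ _ _ rfl]
  · rintro ⟨H, hv⟩ s h
    rcases Nat.lt_succ_iff_lt_or_eq.1 h with h' | h'
    · rw [H s h', snoc_elt_lt _ _ _ h']
    · have hs : s = ⟨k, hk⟩ := Fin.ext h'
      rw [snoc_elt_eq _ _ _ h', hs]
      exact hv

lemma cond_iff {T k : ℕ} (hk : k ≤ T) (p : Fin k → V) (y : Fin T → V) :
    (∀ s : Fin T, ∀ h : s.1 < k, y s = p ⟨s.1, h⟩) ↔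
      (∀ s : Fin k, y (Fin.castLE hk s) = p s) := by
  constructor
  · intro H s
    have h := H (Fin.castLE hk s) (by simpa using s.isLt)
    simpa using h
  · intro H s h
    have h2 := H ⟨s.1, h⟩
    have : Fin.castLE hk ⟨s.1, h⟩ = s := Fin.ext rfl
    rwa [this] at h2

lemma Qval_eq_Vexp (T : ℕ) (R : X → (Fin T → V) → ℝ) (π : Policy X V) (k : ℕ) (hk : k < T)
    (c : X × (Fin k → V)) (v : V) :
    Qval T R π k hk c v = Vexp T R π (k + 1) (c.1, Fin.snoc c.2 v) := by
  classical
  unfold Qval Vexp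
  apply Finset.sum_congr rfl
  intro y _
  have hiff : ((∀ s : Fin k, y (Fin.castLE hk.le s) = c.2 s) ∧ y ⟨k, hk⟩ = v) ↔
      (∀ s : Fin T, ∀ h : s.1 < k + 1, y s = (Fin.snoc c.2 v : Fin (k+1) → V) ⟨s.1, h⟩) := by
    rw [cond_succ_iff hk, cond_iff hk.le]
  exact if_congr hiff rfl rfl

lemma prod_split {T k : ℕ} (hk : k < T) (f : Fin T → ℝ) :
    (∏ s : Fin T, if k ≤ s.1 then f s else 1)
      = f ⟨k, hk⟩ * ∏ s : Fin T, if k + 1 ≤ s.1 then f s else 1 := by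
  classical
  have h1 : ∀ s : Fin T, (if k ≤ s.1 then f s else 1)
      = (if s.1 = k then f s else 1) * (if k + 1 ≤ s.1 then f s else 1) := by
    intro s
    rcases lt_trichotomy s.1 k with h | h | h
    · rw [if_neg (by omega), if_neg (by omega), if_neg (by omega), mul_one]
    · rw [if_pos (by omega), if_pos h, if_neg (by omega), mul_one]
    · rw [if_pos (by omega), if_neg (by omega), if_pos (by omega), one_mul]
  rw [Finset.prod_congr rfl fun s _ => h1 s, Finset.prod_mul_distrib]
  congr 1
  rw [Finset.prod_eq_single (⟨k, hk⟩ : Fin T)]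
  · rw [if_pos rfl]
  · intro b _ hb
    rw [if_neg fun hbk => hb (Fin.ext hbk)]
  · intro h
    exact absurd (Finset.mem_univ _) h

lemma Vexp_succ (T : ℕ) (R : X → (Fin T → V) → ℝ) (π : Policy X V) (k : ℕ) (hk : k < T)
    (c : X × (Fin k → V)) :
    Vexp T R π k c = ∑ v, π.prob k c v * Vexp T R π (k + 1) (c.1, Fin.snoc c.2 v) := by
  classical
  unfold Vexp
  dsimp only
  simp only [Finset.mul_sum]
  rw [Finset.sum_comm]
  apply Finset.sum_congr rfl
  intro y _
  rcases em (∀ s : Fin T, ∀ h : s.1 < k, y s = c.2 ⟨s.1, h⟩) with hc | hc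
  · rw [if_pos hc]
    have step : ∀ v : V,
        π.prob k c v * (if (∀ s : Fin T, ∀ h : s.1 < k + 1, y s = (Fin.snoc c.2 v : Fin (k+1) → V) ⟨s.1, h⟩) then
            (∏ s : Fin T, if k + 1 ≤ s.1 then
              π.prob s.1 (c.1, fun u : Fin s.1 => y (Fin.castLE s.isLt.le u)) (y s) else 1) * R c.1 y
          else 0)
        = (if y ⟨k, hk⟩ = v then
            π.prob k c v * ((∏ s : Fin T, if k + 1 ≤ s.1 then
              π.prob s.1 (c.1, fun u : Fin s.1 => y (Fin.castLE s.isLt.le u)) (y s) else 1) * R c.1 y)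
          else 0) := by
      intro v
      by_cases hv : y ⟨k, hk⟩ = v
      · rw [if_pos hv, if_pos ((cond_succ_iff hk c.2 v y).2 ⟨hc, hv⟩)]
      · rw [if_neg hv, if_neg (fun hcond => hv ((cond_succ_iff hk c.2 v y).1 hcond).2), mul_zero]
    rw [Finset.sum_congr rfl fun v _ => step v, Finset.sum_ite_eq Finset.univ (y ⟨k, hk⟩)]
    rw [if_pos (Finset.mem_univ _)]
    rw [prod_split hk]
    have hctx : (fun u : Fin k => y (Fin.castLE hk.le u)) = c.2 := by
      funext u
      have h2 := hc (Fin.castLE hk.le u) (by simpa using u.isLt)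
      simpa using h2
    show (π.prob k (c.1, fun u : Fin k => y (Fin.castLE hk.le u)) (y ⟨k, hk⟩) *
        ∏ s : Fin T, if k + 1 ≤ s.1 then
          π.prob s.1 (c.1, fun u : Fin s.1 => y (Fin.castLE s.isLt.le u)) (y s) else 1) * R c.1 y = _
    rw [hctx, Prod.mk.eta]
    ring
  · rw [if_neg hc]
    symm
    apply Finset.sum_eq_zero
    intro v _
    rw [if_neg (fun hcond => hc ((cond_succ_iff hk c.2 v y).1 hcond).1), mul_zero]

lemma Vexp_last (T : ℕ) (R : X → (Fin T → V) → ℝ) (π : Policy X V) (c : X × (Fin T → V)) :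
    Vexp T R π T c = R c.1 c.2 := by
  classical
  unfold Vexp
  have h1 : ∀ y : Fin T → V,
      (if (∀ s : Fin T, ∀ h : s.1 < T, y s = c.2 ⟨s.1, h⟩) then
        (∏ s : Fin T, if T ≤ s.1 then
          π.prob s.1 (c.1, fun u : Fin s.1 => y (Fin.castLE s.isLt.le u)) (y s) else 1) * R c.1 y
      else 0) = if y = c.2 then R c.1 y else 0 := by
    intro y
    have hiff : (∀ s : Fin T, ∀ h : s.1 < T, y s = c.2 ⟨s.1, h⟩) ↔ y = c.2 := by
      constructor
      · intro H
        funext s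
        have := H s s.isLt
        simpa using this
      · intro H s h
        rw [H]
    have hprod : (∏ s : Fin T, if T ≤ s.1 then
        π.prob s.1 (c.1, fun u : Fin s.1 => y (Fin.castLE s.isLt.le u)) (y s) else 1) = 1 :=
      Finset.prod_eq_one fun s _ => if_neg (Nat.not_le.2 s.isLt)
    rw [hprod, one_mul]
    exact if_congr hiff rfl rfl
  rw [Finset.sum_congr rfl fun y _ => h1 y, Finset.sum_ite_eq' Finset.univ c.2]
  rw [if_pos (Finset.mem_univ _)]

lemma Vval_eq_Vexp (T : ℕ) (R : X → (Fin T → V) → ℝ) (π : Policy X V) (k : ℕ) (hk : k < T)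
    (c : X × (Fin k → V)) : Vval T R π k hk c = Vexp T R π k c := by
  unfold Vval
  rw [Finset.sum_congr rfl fun v _ => by rw [Qval_eq_Vexp T R π k hk c v]]
  exact (Vexp_succ T R π k hk c).symm

lemma Vexp_total (T : ℕ) (π : Policy X V) :
    ∀ j k, k + j = T → ∀ c : X × (Fin k → V),
      Vexp T (fun _ _ => (1 : ℝ)) π k c = 1 := by
  intro j
  induction j with
  | zero =>
    intro k hkT c
    have hk : k = T := by omega
    subst hk
    rw [Vexp_last]
  | succ j ih =>
    intro k hkT c
    have hk : k < T := by omega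
    rw [Vexp_succ _ _ _ _ hk]
    have h1 : ∀ v : V, π.prob k c v * Vexp T (fun _ _ => (1:ℝ)) π (k+1) (c.1, Fin.snoc c.2 v)
        = π.prob k c v := by
      intro v
      rw [ih (k+1) (by omega), mul_one]
    rw [Finset.sum_congr rfl fun v _ => h1 v, π.sum_one]

lemma Vexp_nonneg (T : ℕ) (R : X → (Fin T → V) → ℝ) (π : Policy X V) (k : ℕ)
    (c : X × (Fin k → V)) (hR : ∀ x y, 0 ≤ R x y) : 0 ≤ Vexp T R π k c := by
  classical
  unfold Vexp
  apply Finset.sum_nonneg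
  intro y _
  split
  · apply mul_nonneg _ (hR _ _)
    apply Finset.prod_nonneg
    intro s _
    split
    · exact (π.pos _ _ _).le
    · exact zero_le_one
  · exact le_refl 0

lemma Vexp_le_one (T : ℕ) (R : X → (Fin T → V) → ℝ) (π : Policy X V) (k : ℕ) (hk : k ≤ T)
    (c : X × (Fin k → V)) (hR : ∀ x y, R x y ≤ 1) : Vexp T R π k c ≤ 1 := by
  classical
  have h2 : Vexp T R π k c ≤ Vexp T (fun _ _ => (1:ℝ)) π k c := by
    unfold Vexp
    apply Finset.sum_le_sum
    intro y _
    split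
    · apply mul_le_mul_of_nonneg_left (hR _ _)
      apply Finset.prod_nonneg
      intro s _
      split
      · exact (π.pos _ _ _).le
      · exact zero_le_one
    · exact le_refl 0
  rw [Vexp_total T π (T - k) k (by omega) c] at h2
  exact h2

def snocEquiv (k : ℕ) : ((Fin k → V) × V) ≃ (Fin (k + 1) → V) where
  toFun pv := Fin.snoc pv.1 pv.2
  invFun y := (Fin.init y, y (Fin.last k))
  left_inv := by
    rintro ⟨p, v⟩
    simp [Fin.init_snoc, Fin.snoc_last]
  right_inv := by
    intro y
    simp [Fin.snoc_init_self]

lemma sum_snoc {k : ℕ} (f : (Fin (k + 1) → V) → ℝ) :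
    ∑ y, f y = ∑ p : Fin k → V, ∑ v, f (Fin.snoc p v) := by
  rw [← show ∑ pv : (Fin k → V) × V, f (Fin.snoc pv.1 pv.2) = ∑ y, f y from
    Fintype.sum_equiv (snocEquiv k) _ f fun pv => rfl]
  exact Fintype.sum_prod_type _

lemma snoc_prefix {k : ℕ} (p : Fin k → V) (v : V) (m : ℕ) (hm : m ≤ k) (hm' : m ≤ k + 1) :
    (fun u : Fin m => (Fin.snoc p v : Fin (k + 1) → V) (Fin.castLE hm' u))
      = fun u : Fin m => p (Fin.castLE hm u) := by
  funext u
  rw [snoc_elt_lt _ _ _ (show (Fin.castLE hm' u).1 < k from lt_of_lt_of_le u.isLt hm)]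
  congr 1

lemma visit_succ (π : Policy X V) (P : X → ℝ) (k : ℕ) (x : X) (p : Fin k → V) (v : V) :
    visit π P (k + 1) (x, Fin.snoc p v) = visit π P k (x, p) * π.prob k (x, p) v := by
  unfold visit
  dsimp only
  rw [Fin.prod_univ_castSucc]
  have hcast : ∀ t : Fin k,
      π.prob (Fin.castSucc t).1 (x, fun u : Fin (Fin.castSucc t).1 =>
        (Fin.snoc p v : Fin (k+1) → V) (Fin.castLE (Fin.castSucc t).isLt.le u))
        ((Fin.snoc p v : Fin (k+1) → V) (Fin.castSucc t))
      = π.prob t.1 (x, fun u : Fin t.1 => p (Fin.castLE t.isLt.le u)) (p t) := by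
    intro t
    rw [Fin.snoc_castSucc]
    show π.prob t.1 (x, fun u : Fin t.1 =>
      (Fin.snoc p v : Fin (k+1) → V) (Fin.castLE (Fin.castSucc t).isLt.le u)) (p t) = _
    rw [snoc_prefix p v t.1 t.isLt.le]
  have hlast :
      π.prob (Fin.last k).1 (x, fun u : Fin (Fin.last k).1 =>
        (Fin.snoc p v : Fin (k+1) → V) (Fin.castLE (Fin.last k).isLt.le u))
        ((Fin.snoc p v : Fin (k+1) → V) (Fin.last k))
      = π.prob k (x, p) v := by
    rw [Fin.snoc_last]
    show π.prob k (x, fun u : Fin k =>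
      (Fin.snoc p v : Fin (k+1) → V) (Fin.castLE (Fin.last k).isLt.le u)) v = _
    rw [snoc_prefix p v k le_rfl]
    have hid : (fun u : Fin k => p (Fin.castLE le_rfl u)) = p :=
      funext fun u => congrArg p (Fin.ext rfl)
    rw [hid]
  rw [Finset.prod_congr rfl fun t _ => hcast t, hlast]
  ring

lemma visit_nonneg (π : Policy X V) (P : X → ℝ) (hP0 : ∀ x, 0 ≤ P x) (k : ℕ)
    (c : X × (Fin k → V)) : 0 ≤ visit π P k c := by
  unfold visit
  exact mul_nonneg (hP0 _) (Finset.prod_nonneg fun s _ => (π.pos _ _ _).le)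

lemma visit_total (π : Policy X V) (P : X → ℝ) (hP1 : ∑ x, P x = 1) :
    ∀ k : ℕ, ∑ x : X, ∑ p : Fin k → V, visit π P k (x, p) = 1 := by
  intro k
  induction k with
  | zero =>
    have h0 : ∀ x : X, ∑ p : Fin 0 → V, visit π P 0 (x, p) = P x := by
      intro x
      haveI : Unique (Fin 0 → V) :=
        ⟨⟨fun i => i.elim0⟩, fun f => funext fun i => i.elim0⟩
      rw [Fintype.sum_unique]
      unfold visit
      simp
    rw [Finset.sum_congr rfl fun x _ => h0 x, hP1]
  | succ k ih =>
    have h1 : ∀ x : X, ∑ y : Fin (k+1) → V, visit π P (k+1) (x, y)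
        = ∑ p : Fin k → V, visit π P k (x, p) := by
      intro x
      rw [sum_snoc (fun y => visit π P (k+1) (x, y))]
      apply Finset.sum_congr rfl
      intro p _
      rw [Finset.sum_congr rfl fun v _ => visit_succ π P k x p v, ← Finset.mul_sum,
        π.sum_one, mul_one]
    rw [Finset.sum_congr rfl fun x _ => h1 x, ih]

/-- Total (in `k`) version of `gval`. -/
noncomputable def gval' (T : ℕ) (R : X → (Fin T → V) → ℝ) (πroll πθ : Policy X V) (k : ℕ)
    (c : X × (Fin k → V)) : ℝ :=
  (∑ v, πθ.prob k c v * Vexp T R πroll (k + 1) (c.1, Fin.snoc c.2 v)) - Vexp T R πroll k c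

lemma gval_eq_gval' (T : ℕ) (R : X → (Fin T → V) → ℝ) (πroll πθ : Policy X V) (k : ℕ)
    (hk : k < T) (c : X × (Fin k → V)) :
    gval T R πroll πθ k hk c = gval' T R πroll πθ k c := by
  unfold gval Aval gval'
  rw [Finset.sum_congr rfl fun v _ => mul_sub (πθ.prob k c v) _ _, Finset.sum_sub_distrib,
    ← Finset.sum_mul, πθ.sum_one, one_mul, Vval_eq_Vexp T R πroll k hk c]
  congr 1
  exact Finset.sum_congr rfl fun v _ => by rw [Qval_eq_Vexp T R πroll k hk c v]

/-- Hybrid value: prefix of length `k` from `πθ`, continuation by `πroll`. -/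
noncomputable def Wfun (P : X → ℝ) (T : ℕ) (R : X → (Fin T → V) → ℝ)
    (πroll πθ : Policy X V) (k : ℕ) : ℝ :=
  ∑ x : X, ∑ p : Fin k → V, visit πθ P k (x, p) * Vexp T R πroll k (x, p)

lemma Wfun_succ (P : X → ℝ) (T : ℕ) (R : X → (Fin T → V) → ℝ)
    (πroll πθ : Policy X V) (k : ℕ) (hk : k < T) :
    Wfun P T R πroll πθ (k + 1) = Wfun P T R πroll πθ k
      + ∑ x : X, ∑ p : Fin k → V, visit πθ P k (x, p) * gval' T R πroll πθ k (x, p) := by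
  unfold Wfun
  have h1 : ∀ x : X, ∑ y : Fin (k+1) → V, visit πθ P (k+1) (x, y) * Vexp T R πroll (k+1) (x, y)
      = ∑ p : Fin k → V, visit πθ P k (x, p) *
          (∑ v, πθ.prob k (x, p) v * Vexp T R πroll (k+1) (x, Fin.snoc p v)) := by
    intro x
    rw [sum_snoc (fun y => visit πθ P (k+1) (x, y) * Vexp T R πroll (k+1) (x, y))]
    apply Finset.sum_congr rfl
    intro p _
    rw [Finset.mul_sum]
    apply Finset.sum_congr rfl
    intro v _
    rw [visit_succ πθ P k x p v]
    ring
  rw [Finset.sum_congr rfl fun x _ => h1 x, ← Finset.sum_add_distrib]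
  apply Finset.sum_congr rfl
  intro x _
  rw [← Finset.sum_add_distrib]
  apply Finset.sum_congr rfl
  intro p _
  unfold gval'
  ring

lemma Wfun_zero (P : X → ℝ) (T : ℕ) (R : X → (Fin T → V) → ℝ) (πroll πθ : Policy X V) :
    Wfun P T R πroll πθ 0 = Jval P T R πroll := by
  classical
  unfold Wfun Jval
  apply Finset.sum_congr rfl
  intro x _
  haveI : Unique (Fin 0 → V) :=
    ⟨⟨fun i => i.elim0⟩, fun f => funext fun i => i.elim0⟩
  rw [Fintype.sum_unique]
  have hvisit : visit πθ P 0 (x, default) = P x := by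
    unfold visit
    simp
  rw [hvisit]
  congr 1
  unfold Vexp traj
  apply Finset.sum_congr rfl
  intro y _
  have hc : ∀ (s : Fin T) (h : (s : ℕ) < 0), y s = (x, (default : Fin 0 → V)).2 ⟨s.1, h⟩ :=
    fun s h => absurd h (Nat.not_lt_zero _)
  rw [if_pos hc]
  congr 1

lemma Wfun_last (P : X → ℝ) (T : ℕ) (R : X → (Fin T → V) → ℝ) (πroll πθ : Policy X V) :
    Wfun P T R πroll πθ T = Jval P T R πθ := by
  unfold Wfun Jval
  apply Finset.sum_congr rfl
  intro x _
  rw [Finset.mul_sum]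
  apply Finset.sum_congr rfl
  intro y _
  rw [Vexp_last]
  show visit πθ P T (x, y) * R x y = P x * (traj πθ T x y * R x y)
  have : visit πθ P T (x, y) = P x * traj πθ T x y := rfl
  rw [this]
  ring

lemma err_eq (P : X → ℝ) (T : ℕ) (R : X → (Fin T → V) → ℝ) (πroll πθ : Policy X V) :
    errVal P T R πroll πθ = ∑ k ∈ Finset.range T, ∑ x : X, ∑ p : Fin k → V,
      (visit πθ P k (x, p) - visit πroll P k (x, p)) * gval' T R πroll πθ k (x, p) := by
  have hJ : Jval P T R πθ - Jval P T R πroll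
      = ∑ k ∈ Finset.range T, ∑ x : X, ∑ p : Fin k → V,
          visit πθ P k (x, p) * gval' T R πroll πθ k (x, p) := by
    rw [← Wfun_last P T R πroll πθ, ← Wfun_zero P T R πroll πθ,
      ← Finset.sum_range_sub (Wfun P T R πroll πθ) T]
    apply Finset.sum_congr rfl
    intro k hkmem
    rw [Wfun_succ P T R πroll πθ k (Finset.mem_range.1 hkmem)]
    ring
  have hS : surrogate P T R πroll πθ
      = ∑ k ∈ Finset.range T, ∑ x : X, ∑ p : Fin k → V,
          visit πroll P k (x, p) * gval' T R πroll πθ k (x, p) := by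
    unfold surrogate
    rw [← Fin.sum_univ_eq_sum_range (fun k => ∑ x : X, ∑ p : Fin k → V,
      visit πroll P k (x, p) * gval' T R πroll πθ k (x, p)) T]
    apply Finset.sum_congr rfl
    intro k _
    rw [Fintype.sum_prod_type]
    exact Finset.sum_congr rfl fun x _ => Finset.sum_congr rfl fun p _ => by
      rw [gval_eq_gval' T R πroll πθ k.1 k.isLt (x, p)]
  unfold errVal
  rw [hJ, hS, ← Finset.sum_sub_distrib]
  apply Finset.sum_congr rfl; intro k _
  rw [← Finset.sum_sub_distrib]
  apply Finset.sum_congr rfl; intro x _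
  rw [← Finset.sum_sub_distrib]
  apply Finset.sum_congr rfl; intro p _
  ring

lemma visit_diff_bound (T : ℕ) (πroll πθ : Policy X V) (P : X → ℝ)
    (hP0 : ∀ x, 0 ≤ P x) (hP1 : ∑ x, P x = 1) (D : ℝ)
    (hD : ∀ k : ℕ, k < T → ∀ c : X × (Fin k → V),
      tvDist (πθ.prob k c) (πroll.prob k c) ≤ D) :
    ∀ k : ℕ, k ≤ T →
      ∑ x : X, ∑ p : Fin k → V, |visit πθ P k (x, p) - visit πroll P k (x, p)|
        ≤ 2 * k * D := by
  intro k
  induction k with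
  | zero =>
    intro _
    have h0 : ∀ x : X, ∑ p : Fin 0 → V, |visit πθ P 0 (x, p) - visit πroll P 0 (x, p)| = 0 := by
      intro x
      apply Finset.sum_eq_zero
      intro p _
      unfold visit
      simp
    rw [Finset.sum_congr rfl fun x _ => h0 x]
    simp
  | succ k ih =>
    intro hk1
    have hkT : k < T := hk1
    have key : ∀ (x : X) (p : Fin k → V),
        ∑ v, |visit πθ P (k+1) (x, Fin.snoc p v) - visit πroll P (k+1) (x, Fin.snoc p v)|
          ≤ |visit πθ P k (x, p) - visit πroll P k (x, p)|
            + visit πroll P k (x, p) * (2 * D) := by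
      intro x p
      have har : 0 ≤ visit πroll P k (x, p) := visit_nonneg πroll P hP0 k (x, p)
      have step : ∀ v, |visit πθ P (k+1) (x, Fin.snoc p v) - visit πroll P (k+1) (x, Fin.snoc p v)|
          ≤ |visit πθ P k (x, p) - visit πroll P k (x, p)| * πθ.prob k (x, p) v
            + visit πroll P k (x, p) * |πθ.prob k (x, p) v - πroll.prob k (x, p) v| := by
        intro v
        rw [visit_succ πθ P k x p v, visit_succ πroll P k x p v]
        have hsplit : visit πθ P k (x, p) * πθ.prob k (x, p) v
              - visit πroll P k (x, p) * πroll.prob k (x, p) v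
            = (visit πθ P k (x, p) - visit πroll P k (x, p)) * πθ.prob k (x, p) v
              + visit πroll P k (x, p) * (πθ.prob k (x, p) v - πroll.prob k (x, p) v) := by
          ring
        rw [hsplit]
        refine (abs_add_le _ _).trans ?_
        rw [abs_mul, abs_mul, abs_of_nonneg (πθ.pos k (x, p) v).le, abs_of_nonneg har]
      refine (Finset.sum_le_sum fun v _ => step v).trans ?_
      rw [Finset.sum_add_distrib, ← Finset.mul_sum, ← Finset.mul_sum, πθ.sum_one, mul_one]
      have htv : ∑ v, |πθ.prob k (x, p) v - πroll.prob k (x, p) v| ≤ 2 * D := by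
        have h2 := hD k hkT (x, p)
        unfold tvDist at h2
        linarith
      have h3 := mul_le_mul_of_nonneg_left htv har
      linarith
    have hx : ∀ x : X,
        ∑ y : Fin (k+1) → V, |visit πθ P (k+1) (x, y) - visit πroll P (k+1) (x, y)|
        ≤ ∑ p : Fin k → V, (|visit πθ P k (x, p) - visit πroll P k (x, p)|
            + visit πroll P k (x, p) * (2 * D)) := by
      intro x
      rw [sum_snoc (fun y => |visit πθ P (k+1) (x, y) - visit πroll P (k+1) (x, y)|)]
      exact Finset.sum_le_sum fun p _ => key x p
    refine (Finset.sum_le_sum fun x _ => hx x).trans ?_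
    have hsum : ∑ x : X, ∑ p : Fin k → V, (|visit πθ P k (x, p) - visit πroll P k (x, p)|
          + visit πroll P k (x, p) * (2 * D))
        = (∑ x : X, ∑ p : Fin k → V, |visit πθ P k (x, p) - visit πroll P k (x, p)|)
          + (∑ x : X, ∑ p : Fin k → V, visit πroll P k (x, p)) * (2 * D) := by
      rw [Finset.sum_mul, ← Finset.sum_add_distrib]
      apply Finset.sum_congr rfl
      intro x _
      rw [Finset.sum_mul, ← Finset.sum_add_distrib]
    rw [hsum, visit_total πroll P hP1 k]
    have h4 := ih (Nat.le_of_lt hkT)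
    have h5 : (2 : ℝ) * (k + 1 : ℕ) * D = 2 * (k : ℕ) * D + 1 * (2 * D) := by
      push_cast
      ring
    rw [h5]
    linarith

lemma gval'_repr (T : ℕ) (R : X → (Fin T → V) → ℝ) (πroll πθ : Policy X V) (k : ℕ)
    (hk : k < T) (c : X × (Fin k → V)) :
    gval' T R πroll πθ k c
      = ∑ v, (πθ.prob k c v - πroll.prob k c v) * Vexp T R πroll (k+1) (c.1, Fin.snoc c.2 v) := by
  unfold gval'
  rw [Vexp_succ T R πroll k hk c, ← Finset.sum_sub_distrib]
  apply Finset.sum_congr rfl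
  intro v _
  ring

lemma gval'_bound (T : ℕ) (R : X → (Fin T → V) → ℝ) (πroll πθ : Policy X V) (k : ℕ)
    (hk : k < T) (hR : ∀ x y, R x y ∈ Set.Icc (0:ℝ) 1) (c : X × (Fin k → V)) :
    |gval' T R πroll πθ k c| ≤ 2 * tvDist (πθ.prob k c) (πroll.prob k c) := by
  rw [gval'_repr T R πroll πθ k hk c]
  refine (Finset.abs_sum_le_sum_abs _ _).trans ?_
  have hterm : ∀ v, |(πθ.prob k c v - πroll.prob k c v)
        * Vexp T R πroll (k+1) (c.1, Fin.snoc c.2 v)|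
      ≤ |πθ.prob k c v - πroll.prob k c v| := by
    intro v
    rw [abs_mul]
    have h0 : 0 ≤ Vexp T R πroll (k+1) (c.1, Fin.snoc c.2 v) :=
      Vexp_nonneg T R πroll (k+1) _ fun x y => (hR x y).1
    have h1 : Vexp T R πroll (k+1) (c.1, Fin.snoc c.2 v) ≤ 1 :=
      Vexp_le_one T R πroll (k+1) hk _ fun x y => (hR x y).2
    rw [abs_of_nonneg h0]
    nlinarith [abs_nonneg (πθ.prob k c v - πroll.prob k c v)]
  refine (Finset.sum_le_sum fun v _ => hterm v).trans ?_
  apply le_of_eq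
  unfold tvDist
  ring

lemma abs_err_le (T : ℕ) (hT : 1 ≤ T) (P : X → ℝ)
    (hP0 : ∀ x, 0 ≤ P x) (hP1 : ∑ x, P x = 1)
    (R : X → (Fin T → V) → ℝ) (hR : ∀ x y, R x y ∈ Set.Icc (0:ℝ) 1)
    (πroll πθ : Policy X V) (D : ℝ) (hD0 : 0 ≤ D)
    (hD : ∀ k : ℕ, k < T → ∀ c : X × (Fin k → V),
      tvDist (πθ.prob k c) (πroll.prob k c) ≤ D) :
    |errVal P T R πroll πθ| ≤ 2 * T * ((T : ℝ) - 1) * D ^ 2 := by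
  rw [err_eq P T R πroll πθ]
  refine (Finset.abs_sum_le_sum_abs _ _).trans ?_
  have hk_bound : ∀ k ∈ Finset.range T,
      |∑ x : X, ∑ p : Fin k → V,
        (visit πθ P k (x, p) - visit πroll P k (x, p)) * gval' T R πroll πθ k (x, p)|
      ≤ (2 * k * D) * (2 * D) := by
    intro k hkmem
    have hk : k < T := Finset.mem_range.1 hkmem
    have h1 : ∀ (x : X) (p : Fin k → V),
        |(visit πθ P k (x, p) - visit πroll P k (x, p)) * gval' T R πroll πθ k (x, p)|
        ≤ |visit πθ P k (x, p) - visit πroll P k (x, p)| * (2 * D) := by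
      intro x p
      rw [abs_mul]
      apply mul_le_mul_of_nonneg_left _ (abs_nonneg _)
      exact le_trans (gval'_bound T R πroll πθ k hk hR (x, p))
        (by have := hD k hk (x, p); linarith)
    calc |∑ x : X, ∑ p : Fin k → V,
        (visit πθ P k (x, p) - visit πroll P k (x, p)) * gval' T R πroll πθ k (x, p)|
        ≤ ∑ x : X, ∑ p : Fin k → V,
          |(visit πθ P k (x, p) - visit πroll P k (x, p)) * gval' T R πroll πθ k (x, p)| := by
          refine (Finset.abs_sum_le_sum_abs _ _).trans ?_
          exact Finset.sum_le_sum fun x _ => Finset.abs_sum_le_sum_abs _ _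
      _ ≤ ∑ x : X, ∑ p : Fin k → V,
          |visit πθ P k (x, p) - visit πroll P k (x, p)| * (2 * D) :=
          Finset.sum_le_sum fun x _ => Finset.sum_le_sum fun p _ => h1 x p
      _ = (∑ x : X, ∑ p : Fin k → V, |visit πθ P k (x, p) - visit πroll P k (x, p)|) * (2 * D) := by
          rw [Finset.sum_mul]
          exact Finset.sum_congr rfl fun x _ => by rw [Finset.sum_mul]
      _ ≤ (2 * k * D) * (2 * D) := by
          apply mul_le_mul_of_nonneg_right
            (visit_diff_bound T πroll πθ P hP0 hP1 D hD k (Nat.le_of_lt hk))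
          linarith
  refine (Finset.sum_le_sum hk_bound).trans ?_
  have hgauss : (∑ i ∈ Finset.range T, (i : ℝ)) * 2 = T * ((T : ℝ) - 1) := by
    have h := congrArg (Nat.cast : ℕ → ℝ) (Finset.sum_range_id_mul_two T)
    push_cast [Nat.cast_sub hT] at h
    convert h using 2
  have : ∑ k ∈ Finset.range T, (2 * (k : ℝ) * D) * (2 * D)
      = (∑ i ∈ Finset.range T, (i : ℝ)) * (4 * D ^ 2) := by
    rw [Finset.sum_mul]
    apply Finset.sum_congr rfl
    intro k _
    ring
  rw [this]
  nlinarith [hgauss]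


end AuxProof

/-- **Classical trust region bound**: if the reward takes values in `[0,1]`, then
`|Error| ≤ 2·T·(T−1)·(D_TV^tok,max)²` and consequently `|Error| ≤ T·(T−1)·D_KL^tok,max`.
Here `Dtv` (resp. `Dkl`) is (an upper bound on, in particular the maximum of) the
token-level TV (resp. KL `D_KL(π_roll ‖ π_θ)`) divergences over all steps and contexts. -/
theorem classical_trust_region_bound
    {X V : Type*} [Fintype X] [Fintype V]
    (T : ℕ) (hT : 1 ≤ T)
    (P : X → ℝ) (hP0 : ∀ x, 0 ≤ P x) (hP1 : ∑ x, P x = 1)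
    (R : X → (Fin T → V) → ℝ) (hR : ∀ x y, R x y ∈ Set.Icc (0:ℝ) 1)
    (πroll πθ : Policy X V)
    (Dtv Dkl : ℝ)
    (hDtv : ∀ k : ℕ, k < T → ∀ c : X × (Fin k → V),
      tvDist (πθ.prob k c) (πroll.prob k c) ≤ Dtv)
    (hDkl : ∀ k : ℕ, k < T → ∀ c : X × (Fin k → V),
      klDiv (πroll.prob k c) (πθ.prob k c) ≤ Dkl) :
    |errVal P T R πroll πθ| ≤ 2 * T * ((T : ℝ) - 1) * Dtv ^ 2 ∧
    |errVal P T R πroll πθ| ≤ T * ((T : ℝ) - 1) * Dkl := by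
  have hX : Nonempty X := by
    by_contra h
    rw [not_nonempty_iff] at h
    rw [Finset.univ_eq_empty, Finset.sum_empty] at hP1
    exact absurd hP1 (by norm_num)
  obtain ⟨x0⟩ := hX
  set c0 : X × (Fin 0 → V) := (x0, fun i => i.elim0) with hc0
  have h0T : 0 < T := hT
  have htv0 : 0 ≤ tvDist (πθ.prob 0 c0) (πroll.prob 0 c0) := by
    unfold tvDist
    positivity
  have hDtv0 : 0 ≤ Dtv := le_trans htv0 (hDtv 0 h0T c0)
  constructor
  · exact abs_err_le T hT P hP0 hP1 R hR πroll πθ Dtv hDtv0 hDtv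
  · have hpin : ∀ k : ℕ, k < T → ∀ c : X × (Fin k → V),
        2 * tvDist (πθ.prob k c) (πroll.prob k c) ^ 2 ≤ klDiv (πroll.prob k c) (πθ.prob k c) :=
      fun k hk c => pinsker_fin _ _ (πroll.pos k c) (πθ.pos k c)
        (πroll.sum_one k c) (πθ.sum_one k c)
    have hDkl0 : 0 ≤ Dkl := by
      have h1 := hpin 0 h0T c0
      have h2 := hDkl 0 h0T c0
      nlinarith [sq_nonneg (tvDist (πθ.prob 0 c0) (πroll.prob 0 c0))]
    have hD' : ∀ k : ℕ, k < T → ∀ c : X × (Fin k → V),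
        tvDist (πθ.prob k c) (πroll.prob k c) ≤ Real.sqrt (Dkl / 2) := by
      intro k hk c
      apply Real.le_sqrt_of_sq_le
      have h1 := hpin k hk c
      have h2 := hDkl k hk c
      linarith
    have hmain := abs_err_le T hT P hP0 hP1 R hR πroll πθ (Real.sqrt (Dkl / 2))
      (Real.sqrt_nonneg _) hD'
    rw [Real.sq_sqrt (by linarith : (0:ℝ) ≤ Dkl / 2)] at hmain
    calc |errVal P T R πroll πθ| ≤ 2 * T * ((T:ℝ) - 1) * (Dkl / 2) := hmain
      _ = T * ((T:ℝ) - 1) * Dkl := by ring
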